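/- Claim in the proof of Theorem A: Assume (H1) and (H2). Fix any vector v ≫ 0 and let L_v be any straight line parallel to v (i.e., L_v = {y + t·v : t ∈ ℝ} for some y ∈ 𝔹). Then U_+ ∩ L_v is at most countable, and likewise U_− ∩ L_v is at most countable. -/

import Mathlib

open Set Topology Filter MeasureTheory Function

universe u

variable {E : Type u} [NormedAddCommGroup E] [NormedSpace ℝ E]
  [MeasurableSpace E] [BorelSpace E]

/-- `x ≤ y` in the order induced by the cone `K`. -/
def coneLE (K : Set E) (x y : E) : Prop := y - x ∈ K

/-- `x < y` in the order induced by the cone `K`. -/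
def coneLT (K : Set E) (x y : E) : Prop := coneLE K x y ∧ x ≠ y

/-- `x ≪ y` (strong ordering) induced by the cone `K`. -/
def coneLL (K : Set E) (x y : E) : Prop := y - x ∈ interior K

/-- `K` is a closed convex cone inducing a partial order. -/
def IsConeOrder (K : Set E) : Prop :=
  IsClosed K ∧ Convex ℝ K ∧
  (∀ x ∈ K, ∀ α : ℝ, 0 < α → α • x ∈ K) ∧
  (∀ x ∈ K, ∀ y ∈ K, x + y ∈ K) ∧
  K ∩ (-K) = {0}

/-- Closed order interval `[a,b]`. -/
def ordCC (K : Set E) (a b : E) : Set E := {z | coneLE K a z ∧ coneLE K z b}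

/-- Open order interval `[[a,b]]`. -/
def ordOO (K : Set E) (a b : E) : Set E := {z | coneLL K a z ∧ coneLL K z b}

/-- `X` is order-convex. -/
def OrderConvexSet (K X : Set E) : Prop :=
  ∀ a ∈ X, ∀ b ∈ X, coneLT K a b → ordCC K a b ⊆ X

/-- `F` is strongly monotone with respect to the cone `K`. -/
def StronglyMonotoneMap (K : Set E) (F : E → E) : Prop :=
  ∀ x y : E, coneLT K x y → coneLL K (F x) (F y)

/-- The semi-orbit `O⁺(x)` of `x` under `F`. -/
def semiOrbit (F : E → E) (x : E) : Set E := {y | ∃ n : ℕ, y = F^[n] x}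

/-- The ω-limit set of `x` under `F`. -/
def omegaSet (F : E → E) (x : E) : Set E := ⋂ k : ℕ, closure (semiOrbit F (F^[k] x))

/-- `F` is ω-compact in `S ⊆ X`. -/
def OmegaCompactIn (F : E → E) (X S : Set E) : Prop :=
  (∀ x ∈ S, IsCompact (closure (semiOrbit F x)) ∧ closure (semiOrbit F x) ⊆ X) ∧
  IsCompact (closure (⋃ x ∈ S, omegaSet F x)) ∧ closure (⋃ x ∈ S, omegaSet F x) ⊆ X

/-- Hypothesis (H2): ω-compactness in every closed order interval of `X`. -/
def OmegaCompactIntervals (K : Set E) (F : E → E) (X : Set E) : Prop :=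
  ∀ a ∈ X, ∀ b ∈ X, coneLE K a b → OmegaCompactIn F X (ordCC K a b)

/-- The upper ω-limit set `ω₊(x)`. -/
def omegaPlus (K : Set E) (F : E → E) (X : Set E) (x : E) : Set E :=
  ⋂ u ∈ {u ∈ X | coneLL K x u},
    closure (⋃ y ∈ {y ∈ X | coneLT K x y ∧ coneLE K y u}, omegaSet F y)

/-- The lower ω-limit set `ω₋(x)`. -/
def omegaMinus (K : Set E) (F : E → E) (X : Set E) (x : E) : Set E :=
  ⋂ u ∈ {u ∈ X | coneLL K u x},
    closure (⋃ y ∈ {y ∈ X | coneLT K y x ∧ coneLE K u y}, omegaSet F y)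

/-- The upper ω-unstable set `U₊`. -/
def Uplus (K : Set E) (F : E → E) (X : Set E) : Set E :=
  {x ∈ X | omegaPlus K F X x ≠ omegaSet F x}

/-- The lower ω-unstable set `U₋`. -/
def Uminus (K : Set E) (F : E → E) (X : Set E) : Set E :=
  {x ∈ X | omegaMinus K F X x ≠ omegaSet F x}

/-- `q` is a periodic point of `F` with minimal period `p ≥ 1`. -/
def IsMinPeriodicPt (F : E → E) (p : ℕ) (q : E) : Prop :=
  1 ≤ p ∧ F^[p] q = q ∧ ∀ l : ℕ, 1 ≤ l → l < p → F^[l] q ≠ q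

/-- `C` is a linearly stable cycle of `F`: the (semi-)orbit of a periodic point of some
minimal period `p` such that the spectral radius of the derivative of `F^[p]` at every
point of the cycle is at most `1`. -/
def IsLinearlyStableCycle (F : E → E) (C : Set E) : Prop :=
  ∃ (q : E) (p : ℕ), IsMinPeriodicPt F p q ∧ C = semiOrbit F q ∧
    ∀ z ∈ semiOrbit F q, ∃ L : E →L[ℝ] E,
      HasFDerivAt (F^[p]) L z ∧ spectralRadius ℝ L ≤ 1

/-- Hypothesis (H3): `F` is C¹ and each derivative is a compact strongly positive operator. -/
def SmoothStronglyPositive (K : Set E) (F : E → E) : Prop :=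
  ∃ F' : E → (E →L[ℝ] E), Continuous F' ∧ (∀ x : E, HasFDerivAt F (F' x) x) ∧
    (∀ x : E, IsCompactOperator ⇑(F' x)) ∧
    ∀ x v : E, coneLT K 0 v → coneLL K 0 (F' x v)

/-- A Borel set `W` is shy: there is a nonzero compactly supported Borel measure `μ` with
`μ (x + W) = 0` for every `x`. -/
def IsShyBorel (W : Set E) : Prop :=
  MeasurableSet W ∧ ∃ μ : Measure E, μ ≠ 0 ∧
    (∃ Q : Set E, IsCompact Q ∧ μ Qᶜ = 0) ∧
    ∀ x : E, μ ((fun y => y - x) ⁻¹' W) = 0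

/-- A set is shy if it is contained in a shy Borel set. -/
def IsShy (W : Set E) : Prop := ∃ W' : Set E, W ⊆ W' ∧ IsShyBorel W'

/-- `S` is prevalent in `A` if `A \ S` is shy. -/
def PrevalentIn (S A : Set E) : Prop := IsShy (A \ S)

/-- An order decomposition `(A, B')` of `X`: both nonempty, relatively closed in `X`,
`A` lower closed, `B'` upper closed, `A ∪ B' = X` and `int (A ∩ B') = ∅`. -/
def IsOrderDecomp (K X A B' : Set E) : Prop :=
  A.Nonempty ∧ B'.Nonempty ∧ A ⊆ X ∧ B' ⊆ X ∧
  closure A ∩ X ⊆ A ∧ closure B' ∩ X ⊆ B' ∧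
  (∀ a ∈ A, ∀ z ∈ X, coneLE K z a → z ∈ A) ∧
  (∀ b ∈ B', ∀ z ∈ X, coneLE K b z → z ∈ B') ∧
  A ∪ B' = X ∧ interior (A ∩ B') = ∅

/-- An invariant order decomposition of `X`. -/
def IsInvOrderDecomp (K X : Set E) (F : E → E) (A B' : Set E) : Prop :=
  IsOrderDecomp K X A B' ∧ F '' A ⊆ A ∧ F '' B' ⊆ B'

/-- A set is unordered if it contains no two points `x < y`. -/
def UnorderedSet (K S : Set E) : Prop := ∀ x ∈ S, ∀ y ∈ S, ¬ coneLT K x y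

/-- An invariant order resolution of `X`. -/
def IsInvOrderResolution (K X : Set E) (F : E → E) (Γ : Set (Set E × Set E)) : Prop :=
  (∀ p ∈ Γ, IsInvOrderDecomp K X F p.1 p.2) ∧
  (∀ p ∈ Γ, ∀ q ∈ Γ, p.1 ⊆ q.1 ∨ q.1 ⊆ p.1) ∧
  (∀ x ∈ X, UnorderedSet K (semiOrbit F x) → ∃ p ∈ Γ, semiOrbit F x ⊆ p.1 ∩ p.2)

/-- Hypothesis (H4): the group `G` acts on `X` by an increasing, jointly continuous
action whose homeomorphisms commute with `F`. -/
def GroupActsOn {G : Type*} [Group G] [TopologicalSpace G]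
    (K X : Set E) (F : E → E) (act : G → E → E) : Prop :=
  ContinuousOn (fun p : G × E => act p.1 p.2) (Set.univ ×ˢ X) ∧
  (∀ g : G, Set.MapsTo (act g) X X) ∧
  (∀ x ∈ X, act (1 : G) x = x) ∧
  (∀ g h : G, ∀ x ∈ X, act (g * h) x = act g (act h x)) ∧
  (∀ g : G, ∀ x ∈ X, ∀ y ∈ X, coneLE K x y → coneLE K (act g x) (act g y)) ∧
  (∀ g : G, ∀ x ∈ X, act g (F x) = F (act g x))

/-- A set `S` is `G`-symmetric if every point of `S` is fixed by every group element. -/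
def GSymmetricSet {G : Type*} (act : G → E → E) (S : Set E) : Prop :=
  ∀ z ∈ S, ∀ g : G, act g z = z

/-!
Along the line `ℓ t = y + t • v` we have `ℓ s ≪ ℓ t` for `s < t`, and `U₋` for `K` is `U₊` for the
reversed cone `-K`, so only `U₊` needs an argument. Let `ℓ t ∈ U₊`.

* If `ω(ℓ t) ⊄ ω₊(ℓ t)`, some point of `ω(ℓ t)` avoids the closure of the ω-limit sets of the
  points of `X` in `(ℓ t, ℓ s]`, for a rational `s > t`.
* If `ω₊(ℓ t) ⊄ ω(ℓ t)`, the closed sets `D u = cl ⋃ {ω(y) | y ∈ X, y ≤ u}` jump at `ℓ t`: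
  `⋂_{u ≫ ℓ t} D u ⊄ D (ℓ t)`. Indeed `ω₊(ℓ t)` lies above `ω(ℓ t)` and `D (ℓ t)` below it
  (the orbit closure is compact), and a point above one point of `ω(x)` and below another lies in
  `ω(x)`, since an ω-limit set contains no two points `a < b`: otherwise `F a ≪ F b` both lie in
  it, which makes the orbit eventually periodic and forces `F a = F b`.

In both cases the parameters `t` carry closed sets `C t` and sets `A t ⊄ C t` with `A t ⊆ C t'` or
`A t' ⊆ C t` whenever `t ≠ t'`. Tagging `t` by a basic open set around a point of `A t \ C t` that
misses `C t` is then injective, and `𝔹` is second countable.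
-/

open Pointwise TopologicalSpace

theorem Set.Pairwise.countable_of_not_subset {ι α : Type*} [TopologicalSpace α]
    [SecondCountableTopology α] {S : Set ι} {A C : ι → Set α}
    (hS : S.Pairwise fun i j => A i ⊆ C j ∨ A j ⊆ C i)
    (hC : ∀ i ∈ S, IsClosed (C i)) (hAC : ∀ i ∈ S, ¬ A i ⊆ C i) : S.Countable := by
  have key : ∀ i ∈ S, ∃ b ∈ countableBasis α, ∃ z ∈ A i, z ∈ b ∧ b ⊆ (C i)ᶜ := by
    intro i hi
    obtain ⟨z, hzA, hzC⟩ := Set.not_subset.mp (hAC i hi)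
    obtain ⟨b, hb, hzb, hbC⟩ :=
      (isBasis_countableBasis α).exists_subset_of_mem_open hzC (hC i hi).isOpen_compl
    exact ⟨b, hb, z, hzA, hzb, hbC⟩
  choose! b hb z hzA hzb hbC using key
  refine Set.MapsTo.countable_of_injOn hb (fun i hi j hj hij => ?_) (countable_countableBasis α)
  by_contra hne
  rcases hS hi hj hne with h | h
  · exact hbC j hj (hij ▸ hzb i hi) (h (hzA i hi))
  · exact hbC i hi (hij ▸ hzb j hj) (h (hzA j hj))

theorem Monotone.isPeriodicPt_mul_of_iterate_le {α : Type*} [PartialOrder α] {f : α → α}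
    (hf : Monotone f) {x : α} {d d' : ℕ} (hd : f^[d] x ≤ x) (hd' : x ≤ f^[d'] x) :
    Function.IsPeriodicPt f (d * d') x := by
  refine le_antisymm ?_ ?_
  · simpa [Function.iterate_mul] using
      (hf.iterate d).antitone_iterate_of_map_le hd (Nat.zero_le d')
  · simpa [mul_comm d, Function.iterate_mul] using
      (hf.iterate d').monotone_iterate_of_le_map hd' (Nat.zero_le d)

theorem Function.IsPeriodicPt.iterate_eq_self_of_le {α : Type*} [PartialOrder α] {f : α → α}
    (hf : Monotone f) {P k : ℕ} {a : α} (ha : IsPeriodicPt f P a) (hP : 0 < P)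
    (hk : a ≤ f^[k] a) : f^[k] a = a := by
  have hmono : (f^[k])^[1] a ≤ (f^[k])^[P] a :=
    (hf.iterate k).monotone_iterate_of_le_map hk (Nat.one_le_iff_ne_zero.mpr hP.ne')
  rw [Function.iterate_one, ← Function.iterate_mul, (ha.const_mul k).eq] at hmono
  exact le_antisymm hmono hk

namespace IsConeOrder

variable {E : Type*} [NormedAddCommGroup E] [NormedSpace ℝ E] {K : Set E} (hK : IsConeOrder K)
include hK

theorem zero_mem : (0 : E) ∈ K := (hK.2.2.2.2.ge (Set.mem_singleton 0)).1

theorem coneLE_refl (x : E) : coneLE K x x := by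
  simpa [coneLE] using hK.zero_mem

theorem coneLE_trans {x y z : E} (hxy : coneLE K x y) (hyz : coneLE K y z) : coneLE K x z := by
  simpa [coneLE] using hK.2.2.2.1 _ hyz _ hxy

theorem coneLE_antisymm {x y : E} (hxy : coneLE K x y) (hyx : coneLE K y x) : x = y := by
  have h : y - x ∈ K ∩ -K := ⟨hxy, by simpa [Set.mem_neg, neg_sub, coneLE] using hyx⟩
  rw [hK.2.2.2.2] at h
  exact (sub_eq_zero.mp h).symm

abbrev toPartialOrder : PartialOrder E where
  le := coneLE K
  lt := coneLT K
  le_refl := hK.coneLE_refl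
  le_trans _ _ _ := hK.coneLE_trans
  le_antisymm _ _ := hK.coneLE_antisymm
  lt_iff_le_not_ge _ _ :=
    ⟨fun h => ⟨h.1, fun h' => h.2 (hK.coneLE_antisymm h.1 h')⟩,
      fun h => ⟨h.1, fun e => h.2 (e ▸ hK.coneLE_refl _)⟩⟩

theorem mem_of_zero_mem_interior (h0 : (0 : E) ∈ interior K) (w : E) : w ∈ K := by
  have hsmul : Tendsto (fun c : ℝ => c • w) (𝓝 0) (𝓝 0) :=
    (continuous_id.smul continuous_const).tendsto' 0 0 (zero_smul ℝ w)
  have hev : ∀ᶠ c in 𝓝[>] (0 : ℝ), c • w ∈ K ∧ 0 < c :=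
    (eventually_nhdsWithin_of_eventually_nhds
      (hsmul (mem_interior_iff_mem_nhds.mp h0))).and self_mem_nhdsWithin
  obtain ⟨c, hcw, hc⟩ := hev.exists
  simpa [smul_smul, inv_mul_cancel₀ (ne_of_gt hc)] using hK.2.2.1 _ hcw c⁻¹ (inv_pos.mpr hc)

theorem zero_notMem_interior [Nontrivial E] : (0 : E) ∉ interior K := fun h0 => by
  obtain ⟨u, hu⟩ := exists_ne (0 : E)
  have h : u ∈ K ∩ -K :=
    ⟨hK.mem_of_zero_mem_interior h0 u, hK.mem_of_zero_mem_interior h0 (-u)⟩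
  rw [hK.2.2.2.2] at h
  exact hu h

theorem coneLT_of_coneLL [Nontrivial E] {x y : E} (h : coneLL K x y) : coneLT K x y :=
  ⟨interior_subset h, fun hxy => hK.zero_notMem_interior (by simpa [coneLL, hxy] using h)⟩

theorem smul_mem_interior {c : ℝ} (hc : 0 < c) {w : E} (hw : w ∈ interior K) :
    c • w ∈ interior K := by
  have hcK : c • K ⊆ K := by
    rintro _ ⟨k, hk, rfl⟩
    exact hK.2.2.1 k hk c hc
  exact interior_mono hcK (by rw [interior_smul₀ hc.ne']; exact Set.smul_mem_smul_set hw)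

theorem neg : IsConeOrder (-K) := by
  refine ⟨hK.1.neg, hK.2.1.neg, fun x hx α hα => ?_, fun x hx y hy => ?_, ?_⟩
  · simpa [Set.mem_neg, smul_neg] using hK.2.2.1 _ hx α hα
  · rw [Set.mem_neg, neg_add]
    exact hK.2.2.2.1 _ hx _ hy
  · rw [neg_neg, Set.inter_comm, hK.2.2.2.2]

end IsConeOrder

theorem interior_neg {G : Type*} [TopologicalSpace G] [InvolutiveNeg G] [ContinuousNeg G]
    (s : Set G) : interior (-s) = -interior s := by
  simpa [Set.image_neg_eq_neg] using ((Homeomorph.neg G).image_interior s).symm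

section ConeDual

variable {E : Type*} [NormedAddCommGroup E] {K : Set E} {x y : E}

theorem coneLE_neg : coneLE (-K) x y ↔ coneLE K y x := by
  rw [coneLE, coneLE, Set.mem_neg, neg_sub]

theorem coneLT_neg : coneLT (-K) x y ↔ coneLT K y x := by
  rw [coneLT, coneLT, coneLE_neg, ne_comm]

theorem coneLL_neg : coneLL (-K) x y ↔ coneLL K y x := by
  rw [coneLL, coneLL, interior_neg, Set.mem_neg, neg_sub]

theorem ordCC_neg (a b : E) : ordCC (-K) a b = ordCC K b a := by
  ext z
  simp only [ordCC, coneLE_neg, and_comm]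

theorem StronglyMonotoneMap.neg {F : E → E} (hF : StronglyMonotoneMap K F) :
    StronglyMonotoneMap (-K) F :=
  fun x y h => coneLL_neg.mpr (hF y x (coneLT_neg.mp h))

theorem OmegaCompactIntervals.neg {F : E → E} {X : Set E} (hω : OmegaCompactIntervals K F X) :
    OmegaCompactIntervals (-K) F X := fun a ha b hb hab => by
  rw [ordCC_neg]
  exact hω b hb a ha (coneLE_neg.mp hab)

theorem Uplus_neg (F : E → E) (X : Set E) : Uplus (-K) F X = Uminus K F X := by
  simp only [Uplus, Uminus, omegaPlus, omegaMinus, coneLL_neg, coneLT_neg, coneLE_neg]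

end ConeDual

section Orbit

variable {E : Type*} {F : E → E} {x : E}

theorem semiOrbit_iterate (F : E → E) (x : E) (k : ℕ) :
    semiOrbit F (F^[k] x) = (fun n => F^[n] x) '' Ici k := by
  ext z
  constructor
  · rintro ⟨n, rfl⟩
    exact ⟨n + k, Nat.le_add_left k n, Function.iterate_add_apply F n k x⟩
  · rintro ⟨m, hm, rfl⟩
    exact ⟨m - k, by rw [← Function.iterate_add_apply, Nat.sub_add_cancel hm]⟩

theorem mem_semiOrbit_of_isPeriodicPt {P : ℕ} {y a b : E} (hy : IsPeriodicPt F P y) (hP : 0 < P)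
    (ha : a ∈ semiOrbit F y) (hb : b ∈ semiOrbit F y) : b ∈ semiOrbit F a := by
  obtain ⟨i, rfl⟩ := ha
  obtain ⟨j, rfl⟩ := hb
  refine ⟨j + (P * i - i), ?_⟩
  rw [← Function.iterate_add_apply, add_assoc, Nat.sub_add_cancel (Nat.le_mul_of_pos_left i hP),
    Function.iterate_add_apply, (hy.mul_const i).eq]

end Orbit

section OmegaLimit

variable {E : Type*} [NormedAddCommGroup E] {F : E → E} {x : E}

theorem mem_omegaSet_iff {z : E} :
    z ∈ omegaSet F x ↔ MapClusterPt z atTop (fun n => F^[n] x) := by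
  simp only [omegaSet, Set.mem_iInter, semiOrbit_iterate,
    mapClusterPt_atTop_iff_forall_mem_closure]

theorem isClosed_omegaSet : IsClosed (omegaSet F x) :=
  isClosed_iInter fun _ => isClosed_closure

theorem omegaSet_subset_closure_semiOrbit (k : ℕ) :
    omegaSet F x ⊆ closure (semiOrbit F (F^[k] x)) :=
  Set.iInter_subset _ k

theorem isCompact_omegaSet (hx : IsCompact (closure (semiOrbit F x))) :
    IsCompact (omegaSet F x) :=
  hx.of_isClosed_subset isClosed_omegaSet (omegaSet_subset_closure_semiOrbit 0)

theorem mapsTo_omegaSet (hF : Continuous F) : MapsTo F (omegaSet F x) (omegaSet F x) := by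
  intro z hz
  rw [mem_omegaSet_iff] at hz ⊢
  refine MapClusterPt.of_comp (tendsto_add_atTop_nat 1) ?_
  have hshift : (fun n => F^[n] x) ∘ (· + 1) = F ∘ fun n => F^[n] x :=
    funext fun n => Function.iterate_succ_apply' F n x
  rw [hshift]
  exact hz.continuousAt_comp hF.continuousAt

theorem omegaSet_subset_add {K : Set E} (hK : IsClosed K) {w w' : E}
    (hw : IsCompact (closure (semiOrbit F w))) (hle : ∀ n, F^[n] w' - F^[n] w ∈ K) :
    omegaSet F w' ⊆ omegaSet F w + K := by
  intro z hz
  obtain ⟨ψ, hψ, hz⟩ := (mem_omegaSet_iff.mp hz).tendsto_subseq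
  obtain ⟨p, -, φ, hφ, hp⟩ :=
    hw.tendsto_subseq (x := fun j => F^[ψ j] w) fun j => subset_closure ⟨ψ j, rfl⟩
  have hpω : p ∈ omegaSet F w :=
    mem_omegaSet_iff.mpr (MapClusterPt.of_comp (hψ.comp hφ).tendsto_atTop hp.mapClusterPt)
  have hzp : z - p ∈ K :=
    hK.mem_of_tendsto ((hz.comp hφ.tendsto_atTop).sub hp) (Eventually.of_forall fun j => hle _)
  exact ⟨p, hpω, z - p, hzp, add_sub_cancel p z⟩

theorem omegaSet_subset_semiOrbit_of_isPeriodicPt {m P : ℕ} (h : IsPeriodicPt F P (F^[m] x))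
    (hP : 0 < P) : omegaSet F x ⊆ semiOrbit F (F^[m] x) := by
  have hfin : (semiOrbit F (F^[m] x)).Finite :=
    ((Set.finite_Iio P).image fun n => F^[n] (F^[m] x)).subset fun _ ⟨n, hn⟩ =>
      ⟨n % P, Nat.mod_lt n hP, (h.iterate_mod_apply n).trans hn.symm⟩
  exact (omegaSet_subset_closure_semiOrbit m).trans hfin.isClosed.closure_subset

def omegaCloud (F : E → E) (S : Set E) : Set E := closure (⋃ y ∈ S, omegaSet F y)

theorem omegaCloud_mono {S T : Set E} (h : S ⊆ T) : omegaCloud F S ⊆ omegaCloud F T :=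
  closure_mono (Set.biUnion_subset_biUnion_left h)

theorem omegaSet_subset_omegaCloud {S : Set E} {y : E} (hy : y ∈ S) :
    omegaSet F y ⊆ omegaCloud F S :=
  (Set.subset_biUnion_of_mem (u := fun y => omegaSet F y) hy).trans subset_closure

end OmegaLimit

section MonotoneDynamics

variable {E : Type*} [NormedAddCommGroup E] [NormedSpace ℝ E] {K : Set E} {F : E → E} {x : E}

theorem StronglyMonotoneMap.map_coneLE (hF : StronglyMonotoneMap K F) (hK : IsConeOrder K)
    {y z : E} (h : coneLE K y z) : coneLE K (F y) (F z) := by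
  by_cases hyz : y = z
  · subst hyz
    exact hK.coneLE_refl _
  · exact interior_subset (hF y z ⟨h, hyz⟩)

theorem StronglyMonotoneMap.iterate_map_coneLE (hF : StronglyMonotoneMap K F) (hK : IsConeOrder K)
    {y z : E} (h : coneLE K y z) (n : ℕ) : coneLE K (F^[n] y) (F^[n] z) := by
  let _ : PartialOrder E := hK.toPartialOrder
  have hmono : Monotone F := fun _ _ => hF.map_coneLE hK
  exact hmono.iterate n h

theorem isCompact_closure_semiOrbit {X : Set E} (hK : IsConeOrder K)
    (hω : OmegaCompactIntervals K F X) (hx : x ∈ X) : IsCompact (closure (semiOrbit F x)) :=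
  ((hω x hx x hx (hK.coneLE_refl x)).1 x ⟨hK.coneLE_refl x, hK.coneLE_refl x⟩).1

theorem omegaCloud_subset_add (hK : IsConeOrder K) (hF : StronglyMonotoneMap K F) {S : Set E}
    (hx : IsCompact (closure (semiOrbit F x))) (hS : ∀ y ∈ S, coneLE K x y) :
    omegaCloud F S ⊆ omegaSet F x + K :=
  closure_minimal (Set.iUnion₂_subset fun y hy =>
      omegaSet_subset_add hK.1 hx (hF.iterate_map_coneLE hK (hS y hy)))
    (hK.1.add_left_of_isCompact (isCompact_omegaSet hx))

theorem omegaCloud_subset_add_neg (hK : IsConeOrder K) (hF : StronglyMonotoneMap K F)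
    {S : Set E} (hx : IsCompact (closure (semiOrbit F x))) (hS : ∀ y ∈ S, coneLE K y x) :
    omegaCloud F S ⊆ omegaSet F x + -K :=
  omegaCloud_subset_add hK.neg hF.neg hx fun y hy => coneLE_neg.mpr (hS y hy)

theorem exists_isPeriodicPt_of_coneLL (hK : IsConeOrder K) (hF : StronglyMonotoneMap K F)
    {a b : E} (ha : a ∈ omegaSet F x) (hb : b ∈ omegaSet F x) (hab : coneLL K a b) :
    ∃ m P, 0 < P ∧ IsPeriodicPt F P (F^[m] x) := by
  let _ : PartialOrder E := hK.toPartialOrder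
  have hmono : Monotone F := fun _ _ => hF.map_coneLE hK
  obtain ⟨U, hU, V, hV, hUV⟩ := mem_nhds_prod_iff.mp <|
    (isOpen_interior.preimage (continuous_snd.sub continuous_fst)).mem_nhds
      (show (a, b) ∈ _ from hab)
  have hle : ∀ p ∈ U, ∀ q ∈ V, p ≤ q := fun p hp q hq =>
    show coneLE K p q from interior_subset (hUV (Set.mk_mem_prod hp hq))
  -- times `n₁ < m < n₂` with `F^[m] x ∈ U` and `F^[n₁] x, F^[n₂] x ∈ V`: from time `m` on, the
  -- orbit decreases along steps of `m - n₁` and increases along steps of `n₂ - m`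
  have hfa := frequently_atTop.mp ((mem_omegaSet_iff.mp ha).frequently hU)
  have hfb := frequently_atTop.mp ((mem_omegaSet_iff.mp hb).frequently hV)
  obtain ⟨n₁, -, hn₁⟩ := hfb 0
  obtain ⟨m, hm, hmU⟩ := hfa (n₁ + 1)
  obtain ⟨n₂, hn₂, hn₂V⟩ := hfb (m + 1)
  obtain ⟨d, rfl⟩ : ∃ d, m = d + n₁ := ⟨m - n₁, by omega⟩
  obtain ⟨d', rfl⟩ : ∃ d', n₂ = d' + (d + n₁) := ⟨n₂ - (d + n₁), by omega⟩
  refine ⟨d + n₁, d * d', Nat.mul_pos (by omega) (by omega),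
    hmono.isPeriodicPt_mul_of_iterate_le ?_ ?_⟩
  · have h := hmono.iterate d (hle _ hmU _ hn₁)
    rwa [← Function.iterate_add_apply F d n₁] at h
  · rw [← Function.iterate_add_apply]
    exact hle _ hmU _ hn₂V

theorem not_coneLL_of_mem_omegaSet (hK : IsConeOrder K) [Nontrivial E]
    (hF : StronglyMonotoneMap K F) {a b : E} (ha : a ∈ omegaSet F x) (hb : b ∈ omegaSet F x) :
    ¬ coneLL K a b := by
  intro hab
  let _ : PartialOrder E := hK.toPartialOrder
  obtain ⟨m, P, hP, hper⟩ := exists_isPeriodicPt_of_coneLL hK hF ha hb hab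
  have hω := omegaSet_subset_semiOrbit_of_isPeriodicPt hper hP
  obtain ⟨k, rfl⟩ := mem_semiOrbit_of_isPeriodicPt hper hP (hω ha) (hω hb)
  obtain ⟨i, rfl⟩ := hω ha
  have hfix := (hper.apply_iterate i).iterate_eq_self_of_le (fun _ _ => hF.map_coneLE hK) hP
    (interior_subset hab)
  exact hK.zero_notMem_interior (by simpa [coneLL, hfix] using hab)

theorem eq_of_coneLE_of_mem_omegaSet (hK : IsConeOrder K) [Nontrivial E] (hFc : Continuous F)
    (hF : StronglyMonotoneMap K F) {a b : E} (ha : a ∈ omegaSet F x) (hb : b ∈ omegaSet F x)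
    (hab : coneLE K a b) : a = b := by
  by_contra hne
  exact not_coneLL_of_mem_omegaSet hK hF (mapsTo_omegaSet hFc ha) (mapsTo_omegaSet hFc hb)
    (hF a b ⟨hab, hne⟩)

theorem mem_omegaSet_of_mem_add_of_mem_add_neg (hK : IsConeOrder K) [Nontrivial E]
    (hFc : Continuous F) (hF : StronglyMonotoneMap K F) {z : E} (h₁ : z ∈ omegaSet F x + K)
    (h₂ : z ∈ omegaSet F x + -K) : z ∈ omegaSet F x := by
  let _ : PartialOrder E := hK.toPartialOrder
  obtain ⟨r, hr, k, hk, rfl⟩ := Set.mem_add.mp h₁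
  obtain ⟨r', hr', k', hk', hz⟩ := Set.mem_add.mp h₂
  have hrz : r ≤ r + k := show r + k - r ∈ K by simpa using hk
  have hzr' : r + k ≤ r' := show r' - (r + k) ∈ K by
    rw [← hz]
    simpa using hk'
  obtain rfl := eq_of_coneLE_of_mem_omegaSet hK hFc hF hr hr' (hrz.trans hzr')
  rwa [le_antisymm hzr' hrz]

theorem omegaPlus_subset_add (hK : IsConeOrder K) (hF : StronglyMonotoneMap K F) {X : Set E}
    (hx : IsCompact (closure (semiOrbit F x))) (hu : ∃ u ∈ X, coneLL K x u) :
    omegaPlus K F X x ⊆ omegaSet F x + K := by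
  obtain ⟨u, hu⟩ := hu
  intro z hz
  exact omegaCloud_subset_add hK hF hx (fun y hy => hy.2.1.1) (Set.mem_iInter₂.mp hz u hu)

theorem omegaPlus_subset_omegaSet (hK : IsConeOrder K) [Nontrivial E] (hFc : Continuous F)
    (hF : StronglyMonotoneMap K F) {X : Set E} (hx : IsCompact (closure (semiOrbit F x)))
    (hu : ∃ u ∈ X, coneLL K x u)
    (hjump : (⋂ u ∈ {u ∈ X | coneLL K x u}, omegaCloud F {y ∈ X | coneLE K y u}) ⊆
      omegaCloud F {y ∈ X | coneLE K y x}) :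
    omegaPlus K F X x ⊆ omegaSet F x := by
  intro z hz
  have hz' : z ∈ ⋂ u ∈ {u ∈ X | coneLL K x u}, omegaCloud F {y ∈ X | coneLE K y u} :=
    Set.mem_iInter₂.mpr fun u hu =>
      omegaCloud_mono (S := {y ∈ X | coneLT K x y ∧ coneLE K y u}) (T := {y ∈ X | coneLE K y u})
        (fun y hy => ⟨hy.1, hy.2.2⟩) (Set.mem_iInter₂.mp hz u hu)
  exact mem_omegaSet_of_mem_add_of_mem_add_neg hK hFc hF (omegaPlus_subset_add hK hF hx hu hz)
    (omegaCloud_subset_add_neg hK hF hx (fun y hy => hy.2) (hjump hz'))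

end MonotoneDynamics

section Curve

variable {E : Type*} [NormedAddCommGroup E] {K : Set E} {F : E → E} {X : Set E} {ℓ : ℝ → E}

theorem exists_rat_gt_coneLE (hℓc : Continuous ℓ) {t : ℝ} {u : E} (h : coneLL K (ℓ t) u) :
    ∃ s : ℚ, t < s ∧ coneLE K (ℓ s) u := by
  obtain ⟨r, htr, hr⟩ := mem_nhdsGT_iff_exists_Ioo_subset.mp <| mem_nhdsWithin_of_mem_nhds <|
    (isOpen_interior.preimage (continuous_const.sub hℓc)).mem_nhds h
  obtain ⟨s, hts, hsr⟩ := exists_rat_btwn (Set.mem_Ioi.mp htr)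
  exact ⟨s, hts, interior_subset (hr ⟨hts, hsr⟩)⟩

theorem exists_mem_coneLL_of_isOpen (hX : IsOpen X) (hℓc : Continuous ℓ)
    (hℓ : ∀ ⦃s t⦄, s < t → coneLL K (ℓ s) (ℓ t)) {t : ℝ} (ht : ℓ t ∈ X) :
    ∃ u ∈ X, coneLL K (ℓ t) u := by
  obtain ⟨r, htr, hr⟩ := mem_nhdsGT_iff_exists_Ioo_subset.mp <| mem_nhdsWithin_of_mem_nhds <|
    (hX.preimage hℓc).mem_nhds ht
  obtain ⟨s, hts, hsr⟩ := exists_between (Set.mem_Ioi.mp htr)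
  exact ⟨ℓ s, hr ⟨hts, hsr⟩, hℓ hts⟩

theorem countable_setOf_omegaCloud_jump [SecondCountableTopology E]
    (hℓ : ∀ ⦃s t⦄, s < t → coneLL K (ℓ s) (ℓ t)) :
    {t | ℓ t ∈ X ∧ ¬ (⋂ u ∈ {u ∈ X | coneLL K (ℓ t) u}, omegaCloud F {y ∈ X | coneLE K y u}) ⊆
      omegaCloud F {y ∈ X | coneLE K y (ℓ t)}}.Countable := by
  refine Set.Pairwise.countable_of_not_subset
    (A := fun t => ⋂ u ∈ {u ∈ X | coneLL K (ℓ t) u}, omegaCloud F {y ∈ X | coneLE K y u})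
    (C := fun t => omegaCloud F {y ∈ X | coneLE K y (ℓ t)})
    (fun t ht t' ht' hne => ?_) (fun _ _ => isClosed_closure) fun _ ht => ht.2
  rcases lt_or_gt_of_ne hne with h | h
  · exact Or.inl fun z hz => Set.mem_iInter₂.mp hz _ ⟨ht'.1, hℓ h⟩
  · exact Or.inr fun z hz => Set.mem_iInter₂.mp hz _ ⟨ht.1, hℓ h⟩

variable [NormedSpace ℝ E]

theorem countable_setOf_not_omegaSet_subset_omegaCloud [SecondCountableTopology E]
    (hK : IsConeOrder K) [Nontrivial E] (hℓ : ∀ ⦃s t⦄, s < t → coneLL K (ℓ s) (ℓ t)) (s : ℝ) :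
    {t | t < s ∧ ℓ t ∈ X ∧ ¬ omegaSet F (ℓ t) ⊆
      omegaCloud F {y ∈ X | coneLT K (ℓ t) y ∧ coneLE K y (ℓ s)}}.Countable := by
  refine Set.Pairwise.countable_of_not_subset (A := fun t => omegaSet F (ℓ t))
    (C := fun t => omegaCloud F {y ∈ X | coneLT K (ℓ t) y ∧ coneLE K y (ℓ s)})
    (fun t ht t' ht' hne => ?_) (fun _ _ => isClosed_closure) fun _ ht => ht.2.2
  rcases lt_or_gt_of_ne hne with h | h
  · exact Or.inr (omegaSet_subset_omegaCloud
      ⟨ht'.2.1, hK.coneLT_of_coneLL (hℓ h), interior_subset (hℓ ht'.1)⟩)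
  · exact Or.inl (omegaSet_subset_omegaCloud
      ⟨ht.2.1, hK.coneLT_of_coneLL (hℓ h), interior_subset (hℓ ht.1)⟩)

theorem exists_rat_not_omegaSet_subset_omegaCloud (hK : IsConeOrder K) (hℓc : Continuous ℓ)
    {t : ℝ} (h : ¬ omegaSet F (ℓ t) ⊆ omegaPlus K F X (ℓ t)) :
    ∃ s : ℚ, t < s ∧ ¬ omegaSet F (ℓ t) ⊆
      omegaCloud F {y ∈ X | coneLT K (ℓ t) y ∧ coneLE K y (ℓ s)} := by
  obtain ⟨u, ⟨-, htu⟩, hu⟩ : ∃ u ∈ {u ∈ X | coneLL K (ℓ t) u}, ¬ omegaSet F (ℓ t) ⊆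
      omegaCloud F {y ∈ X | coneLT K (ℓ t) y ∧ coneLE K y u} := by
    by_contra! hall
    exact h (Set.subset_iInter₂ hall)
  obtain ⟨s, hts, hsu⟩ := exists_rat_gt_coneLE hℓc htu
  refine ⟨s, hts, fun hsub => hu (hsub.trans (omegaCloud_mono fun y hy => ?_))⟩
  exact ⟨hy.1, hy.2.1, hK.coneLE_trans hy.2.2 hsu⟩

theorem countable_Uplus_inter_range [SecondCountableTopology E] (hK : IsConeOrder K)
    [Nontrivial E] (hFc : Continuous F) (hF : StronglyMonotoneMap K F) (hX : IsOpen X)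
    (hω : OmegaCompactIntervals K F X) (hℓc : Continuous ℓ)
    (hℓ : ∀ ⦃s t⦄, s < t → coneLL K (ℓ s) (ℓ t)) : (Uplus K F X ∩ range ℓ).Countable := by
  rw [Set.inter_comm, ← Set.image_preimage_eq_range_inter]
  refine Set.Countable.image (((Set.countable_iUnion fun s : ℚ =>
    countable_setOf_not_omegaSet_subset_omegaCloud (F := F) (X := X) hK hℓ s).union
      (countable_setOf_omegaCloud_jump (F := F) (X := X) hℓ)).mono ?_) ℓ
  rintro t ⟨htX, hne⟩
  by_cases hsub : omegaSet F (ℓ t) ⊆ omegaPlus K F X (ℓ t)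
  · refine Or.inr ⟨htX, fun hjump => hne (subset_antisymm ?_ hsub)⟩
    exact omegaPlus_subset_omegaSet hK hFc hF (isCompact_closure_semiOrbit hK hω htX)
      (exists_mem_coneLL_of_isOpen hX hℓc hℓ htX) hjump
  · obtain ⟨s, hts, hs⟩ := exists_rat_not_omegaSet_subset_omegaCloud hK hℓc hsub
    exact Or.inl (Set.mem_iUnion.mpr ⟨s, hts, htX, hs⟩)

theorem countable_Uminus_inter_range [SecondCountableTopology E] (hK : IsConeOrder K)
    [Nontrivial E] (hFc : Continuous F) (hF : StronglyMonotoneMap K F) (hX : IsOpen X)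
    (hω : OmegaCompactIntervals K F X) (hℓc : Continuous ℓ)
    (hℓ : ∀ ⦃s t⦄, s < t → coneLL K (ℓ s) (ℓ t)) : (Uminus K F X ∩ range ℓ).Countable := by
  rw [← Uplus_neg, ← neg_surjective.range_comp ℓ]
  exact countable_Uplus_inter_range hK.neg hFc hF.neg hX hω.neg (hℓc.comp continuous_neg)
    fun s t hst => coneLL_neg.mpr (hℓ (neg_lt_neg hst))

theorem coneLL_add_smul (hK : IsConeOrder K) {v : E} (hv : coneLL K 0 v) (y : E) {s t : ℝ}
    (hst : s < t) : coneLL K (y + s • v) (y + t • v) := by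
  rw [coneLL, add_sub_add_left_eq_sub, ← sub_smul]
  exact hK.smul_mem_interior (sub_pos.mpr hst) (by simpa [coneLL] using hv)

end Curve

theorem unstable_line_countable_general [TopologicalSpace.SeparableSpace E]
    (K : Set E) (F : E → E) (X : Set E)
    -- (H1)
    (hK : IsConeOrder K)
    (hFc : Continuous F) (hFm : StronglyMonotoneMap K F)
    -- (H2)
    (hXopen : IsOpen X)
    (hωc : OmegaCompactIntervals K F X)
    (v : E) (hv : coneLL K 0 v) :
    ∀ y : E,
      (Uplus K F X ∩ Set.range (fun t : ℝ => y + t • v)).Countable ∧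
      (Uminus K F X ∩ Set.range (fun t : ℝ => y + t • v)).Countable := by
  intro y
  obtain hE | hE := subsingleton_or_nontrivial E
  · exact ⟨Set.subsingleton_of_subsingleton.countable, Set.subsingleton_of_subsingleton.countable⟩
  have hℓc : Continuous fun t : ℝ => y + t • v := by fun_prop
  have hℓ : ∀ ⦃s t : ℝ⦄, s < t → coneLL K (y + s • v) (y + t • v) :=
    fun _ _ => coneLL_add_smul hK hv y
  exact ⟨countable_Uplus_inter_range hK hFc hFm hXopen hωc hℓc hℓ,
    countable_Uminus_inter_range hK hFc hFm hXopen hωc hℓc hℓ⟩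

/-- Claim in the proof of Theorem A: under (H1) and (H2), for any `v ≫ 0`, every straight
line parallel to `v` meets `U₊` (and `U₋`) in an at most countable set. -/
theorem unstable_line_countable [CompleteSpace E] [TopologicalSpace.SeparableSpace E]
    (K : Set E) (F : E → E) (X : Set E)
    -- (H1)
    (hK : IsConeOrder K) (hKint : (interior K).Nonempty)
    (hFc : Continuous F) (hFm : StronglyMonotoneMap K F)
    -- (H2)
    (hXopen : IsOpen X) (hXoc : OrderConvexSet K X) (hXinv : Set.MapsTo F X X)
    (hωc : OmegaCompactIntervals K F X)
    (v : E) (hv : coneLL K 0 v) :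
    ∀ y : E,
      (Uplus K F X ∩ Set.range (fun t : ℝ => y + t • v)).Countable ∧
      (Uminus K F X ∩ Set.range (fun t : ℝ => y + t • v)).Countable :=
  unstable_line_countable_general K F X hK hFc hFm hXopen hωc v hv
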